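/- arXiv:1810.06499 — 7 statements merged into one kernel-verified Lean document; each statement's English description precedes it below -/
import Mathlib

section
/- Let φ be a pure square automorphism of A(Γ) and let (s₀, s₁, ..., sₙ) be a directed path in the automorphism diagram D_φ (i.e., s_{i+1} ∈ supp(φ(s_i)) for each i). If s₀ commutes with s₁, then s_i commutes with s_{i+1} for all 0 ≤ i ≤ n−1. -/
open Filter Matrix

/-- Relators of the right-angled Artin group of the graph with vertex set `V`
and adjacency relation `E`. -/
def raagRels (V : Type) (E : V → V → Prop) : Set (FreeGroup V) :=
  {r | ∃ v w : V, E v w ∧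
    r = FreeGroup.of v * FreeGroup.of w * (FreeGroup.of v)⁻¹ * (FreeGroup.of w)⁻¹}

/-- The right-angled Artin group `A(Γ)` of the graph `Γ = (V, E)`. -/
abbrev RAAG (V : Type) (E : V → V → Prop) := PresentedGroup (raagRels V E)

/-- The generator of `A(Γ)` corresponding to the vertex `v`. -/
def raagGen {V : Type} (E : V → V → Prop) (v : V) : RAAG V E := PresentedGroup.of v

/-- The support of `g ∈ A(Γ)`: the smallest set of vertices `T` such that `g` lies in the
special subgroup generated by `T` (this is the set of generators appearing in a reduced
spelling of `g`). -/
def supp {V : Type} {E : V → V → Prop} (g : RAAG V E) : Set V :=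
  {v | ∀ T : Set V, g ∈ Subgroup.closure (raagGen E '' T) → v ∈ T}

/-- Word length of `g` with respect to a generating set `S` (and inverses). -/
noncomputable def wlen {G : Type*} [Group G] (S : Set G) (g : G) : ℕ :=
  sInf {n | ∃ l : List G, (∀ x ∈ l, x ∈ S ∨ x⁻¹ ∈ S) ∧ l.prod = g ∧ l.length = n}

/-- The dilatation of `φ` at `w`: `lim_k log|φ^k(w)| / k` (expressed via `limsup`,
which agrees with the limit whenever the limit exists). -/
noncomputable def dilAt {G : Type*} [Group G] (S : Set G) (φ : MulAut G) (w : G) : ℝ :=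
  Filter.limsup (fun k : ℕ => Real.log (wlen S ((φ ^ k) w)) / k) Filter.atTop

/-- `φ` is pure: `s ∈ supp (φ s)` for every generator `s`. -/
def IsPure {V : Type} {E : V → V → Prop} (φ : MulAut (RAAG V E)) : Prop :=
  ∀ s : V, s ∈ supp (φ (raagGen E s))

/-- `φ` is a square map: images of distinct commuting generators have pairwise commuting
supports. -/
def IsSquareMap {V : Type} {E : V → V → Prop} (φ : MulAut (RAAG V E)) : Prop :=
  ∀ s₁ s₂ : V, s₁ ≠ s₂ → Commute (raagGen E s₁) (raagGen E s₂) →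
    ∀ u ∈ supp (φ (raagGen E s₁)), ∀ v ∈ supp (φ (raagGen E s₂)),
      Commute (raagGen E u) (raagGen E v)

/-- The edge relation of the automorphism diagram `D_φ`: a directed edge `s → t`
iff `t ≠ s` and `t ∈ supp (φ s)`. -/
def DEdge {V : Type} {E : V → V → Prop} (φ : MulAut (RAAG V E)) (s t : V) : Prop :=
  t ≠ s ∧ t ∈ supp (φ (raagGen E s))

/-- A directed graph has no directed cycles (cycles may repeat vertices). -/
def NoCycles {V : Type} (D : V → V → Prop) : Prop :=
  ¬ ∃ (n : ℕ) (p : Fin (n + 1) → V),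
    (∀ i : Fin n, D (p i.castSucc) (p i.succ)) ∧ D (p (Fin.last n)) (p 0)

/-- `Wset D i = T₀ ∪ ⋯ ∪ T_i`, the union of the first `i+1` strata of the terminal
partition: `Wset D 0` is the set of terminal vertices, and `v ∈ Wset D (n+1)` iff all
out-neighbours of `v` lie in `Wset D n`. The stratum `T_{n+1}` is
`Wset D (n+1) \ Wset D n`. -/
def Wset {V : Type} (D : V → V → Prop) : ℕ → Set V
  | 0 => {v | ∀ w, ¬ D v w}
  | n + 1 => {v | ∀ w, D v w → w ∈ Wset D n}

theorem path_consecutive_commute {V : Type} [Fintype V] {E : V → V → Prop}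
    (φ : MulAut (RAAG V E)) (hpure : IsPure φ) (hsq : IsSquareMap φ)
    (n : ℕ) (p : Fin (n + 2) → V)
    (hpath : ∀ i : Fin (n + 1), DEdge φ (p i.castSucc) (p i.succ))
    (hcomm : Commute (raagGen E (p 0)) (raagGen E (p 1))) :
    ∀ i : Fin (n + 1), Commute (raagGen E (p i.castSucc)) (raagGen E (p i.succ)) := by
  intro i
  induction i using Fin.induction with
  | zero => exact hcomm
  | succ i ih =>
    have hsc : i.castSucc.succ = i.succ.castSucc := Fin.succ_castSucc i
    have h1 := hpath i.castSucc
    have h2 := hpath i.succ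
    have hne : p i.castSucc.castSucc ≠ p i.castSucc.succ := fun h => h1.1 h.symm
    have := hsq (p i.castSucc.castSucc) (p i.castSucc.succ) hne ih
      (p i.castSucc.succ) h1.2 (p i.succ.succ) (by rw [hsc]; exact h2.2)
    rwa [hsc] at this
end

section
/- Let φ be a pure square automorphism of A(Γ). If (s₀, s₁, ..., sₙ) is a directed path in the automorphism diagram D_φ and s₀ commutes with s₁, then {s₀, s₁, ..., sₙ} spans a complete subgraph of Γ (all pairs commute). -/
open Filter Matrix

theorem path_spans_complete {V : Type} [Fintype V] {E : V → V → Prop}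
    (φ : MulAut (RAAG V E)) (hpure : IsPure φ) (hsq : IsSquareMap φ)
    (n : ℕ) (p : Fin (n + 2) → V)
    (hpath : ∀ i : Fin (n + 1), DEdge φ (p i.castSucc) (p i.succ))
    (hcomm : Commute (raagGen E (p 0)) (raagGen E (p 1))) :
    ∀ i j : Fin (n + 2), Commute (raagGen E (p i)) (raagGen E (p j)) := by
  set q : ℕ → V := fun i => p ⟨min i (n+1), by omega⟩ with hq
  have hqp : ∀ i : Fin (n+2), p i = q i.val := by
    intro i
    simp only [hq]
    congr 1
    ext
    simp [Nat.min_eq_left (Nat.lt_succ_iff.mp i.isLt)]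
  have hedge : ∀ i : ℕ, i ≤ n → DEdge φ (q i) (q (i+1)) := by
    intro i hi
    have h := hpath ⟨i, by omega⟩
    have e1 : (⟨i, by omega⟩ : Fin (n+1)).castSucc = (⟨min i (n+1), by omega⟩ : Fin (n+2)) := by
      ext; simp [Fin.castSucc] <;> omega
    have e2 : (⟨i, by omega⟩ : Fin (n+1)).succ = (⟨min (i+1) (n+1), by omega⟩ : Fin (n+2)) := by
      ext; simp [Fin.succ] <;> omega
    rw [e1, e2] at h
    exact h
  have hq0 : q 0 = p 0 := by
    have : (⟨min 0 (n+1), by omega⟩ : Fin (n+2)) = 0 := by ext; simp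
    simp only [hq]; rw [this]
  have hq1 : q 1 = p 1 := by
    have : (⟨min 1 (n+1), by omega⟩ : Fin (n+2)) = 1 := by ext; simp <;> omega
    simp only [hq]; rw [this]
  have key : ∀ j : ℕ, j ≤ n+1 → ∀ i, i ≤ j →
      Commute (raagGen E (q i)) (raagGen E (q j)) := by
    intro j
    induction j with
    | zero =>
      intro _ i hi
      interval_cases i
      exact Commute.refl _
    | succ j ih =>
      intro hj i hi
      rcases Nat.eq_or_lt_of_le hi with rfl | hi'
      · exact Commute.refl _
      · have hij : i ≤ j := Nat.lt_succ_iff.mp hi'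
        have hjn : j ≤ n + 1 := by omega
        cases j with
        | zero =>
          interval_cases i
          rw [hq0, hq1]; exact hcomm
        | succ m =>
          have hmn : m ≤ n := by omega
          have hm1n : m + 1 ≤ n := by omega
          have hem := hedge m hmn
          have hem1 := hedge (m+1) hm1n
          have hcm : Commute (raagGen E (q m)) (raagGen E (q (m+1))) :=
            ih hjn m (by omega)
          have hne : q m ≠ q (m+1) := fun h => hem.1 h.symm
          have hstep : Commute (raagGen E (q (m+1))) (raagGen E (q (m+2))) :=
            hsq (q m) (q (m+1)) hne hcm (q (m+1)) hem.2 (q (m+2)) hem1.2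
          by_cases h : q i = q (m+1)
          · rw [h]; exact hstep
          · exact hsq (q i) (q (m+1)) h (ih hjn i hij) (q i) (hpure (q i))
              (q (m+2)) hem1.2
  intro i j
  rw [hqp i, hqp j]
  rcases le_total i.val j.val with h | h
  · exact key j.val (Nat.lt_succ_iff.mp j.isLt) i.val h
  · exact (key i.val (Nat.lt_succ_iff.mp i.isLt) j.val h).symm
end

section
/- Let φ be a pure square automorphism of A(Γ) and let (s₀, s₁, ..., sₙ, s₀) be a directed cycle in the automorphism diagram D_φ. If some adjacent pair s_i, s_{i+1} on the cycle commutes in A(Γ), then {s₀, ..., sₙ} spans a complete subgraph of Γ. -/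
open Filter Matrix

/-!
Along a directed walk in `D_φ` whose first two vertices commute, each new vertex `u`, reached by
`s → t → u`, commutes with every `r` that commutes with `t`: for `r ≠ t` apply the square map to
`r, t`, using `r ∈ supp φ(r)` (purity) and `u ∈ supp φ(t)`; for `r = t` apply it to `t, s`, using
`u ∈ supp φ(t)` and `t ∈ supp φ(s)`. So all vertices of the walk pairwise commute. A cycle,
rotated to start at the commuting pair and traversed forever, is such a walk.
-/

section Walk

variable {V : Type} {E : V → V → Prop} {φ : MulAut (RAAG V E)}

lemma commute_of_dEdge (hpure : IsPure φ) (hsq : IsSquareMap φ) {r s t u : V}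
    (hst : DEdge φ s t) (htu : DEdge φ t u) (hcomm : Commute (raagGen E s) (raagGen E t))
    (hr : Commute (raagGen E r) (raagGen E t)) :
    Commute (raagGen E r) (raagGen E u) := by
  by_cases hrt : r = t
  · subst hrt
    exact (hsq r s hst.1 hcomm.symm u htu.2 r hst.2).symm
  · exact hsq r t hrt hr r (hpure r) u htu.2

lemma pairwise_commute_of_walk (hpure : IsPure φ) (hsq : IsSquareMap φ) (q : ℕ → V)
    (hedge : ∀ k, DEdge φ (q k) (q (k + 1)))
    (h01 : Commute (raagGen E (q 0)) (raagGen E (q 1))) (i j : ℕ) :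
    Commute (raagGen E (q i)) (raagGen E (q j)) := by
  have hsucc : ∀ k, ∀ i ≤ k, Commute (raagGen E (q i)) (raagGen E (q (k + 1))) := by
    intro k
    induction k with
    | zero => intro i hi; rwa [Nat.le_zero.1 hi]
    | succ k ih =>
      intro i hi
      refine commute_of_dEdge hpure hsq (hedge k) (hedge (k + 1)) (ih k le_rfl) ?_
      rcases Nat.le_succ_iff.1 hi with hi | rfl
      · exact ih i hi
      · exact Commute.refl _
  have hle : ∀ i j, i ≤ j → Commute (raagGen E (q i)) (raagGen E (q j)) := by
    intro i j hij
    rcases hij.lt_or_eq with hij | rfl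
    · obtain ⟨k, rfl⟩ := Nat.exists_eq_add_one_of_ne_zero (Nat.ne_zero_of_lt hij)
      exact hsucc k i (Nat.le_of_lt_succ hij)
    · exact Commute.refl _
  rcases le_total i j with h | h
  · exact hle i j h
  · exact (hle j i h).symm

end Walk

section Cycle

variable {V : Type} {R : V → V → Prop} {n : ℕ} {p : Fin (n + 1) → V}

lemma Fin.forall_rel_add_one_iff :
    (∀ a : Fin (n + 1), R (p a) (p (a + 1))) ↔
      (∀ i : Fin n, R (p i.castSucc) (p i.succ)) ∧ R (p (Fin.last n)) (p 0) := by
  simp only [Fin.forall_fin_succ', Fin.coeSucc_eq_succ, Fin.last_add_one]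

lemma Fin.exists_rel_add_one_iff :
    (∃ a : Fin (n + 1), R (p a) (p (a + 1))) ↔
      (∃ i : Fin n, R (p i.castSucc) (p i.succ)) ∨ R (p (Fin.last n)) (p 0) := by
  simp only [Fin.exists_fin_succ', Fin.coeSucc_eq_succ, Fin.last_add_one]

end Cycle

theorem cycle_adjacent_commute_complete_general {V : Type} {E : V → V → Prop}
    (φ : MulAut (RAAG V E)) (hpure : IsPure φ) (hsq : IsSquareMap φ)
    (n : ℕ) (p : Fin (n + 1) → V)
    (hpath : ∀ i : Fin n, DEdge φ (p i.castSucc) (p i.succ))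
    (hcyc : DEdge φ (p (Fin.last n)) (p 0))
    (hadj : (∃ i : Fin n, Commute (raagGen E (p i.castSucc)) (raagGen E (p i.succ))) ∨
      Commute (raagGen E (p (Fin.last n))) (raagGen E (p 0))) :
    ∀ i j : Fin (n + 1), Commute (raagGen E (p i)) (raagGen E (p j)) := by
  have hedge := Fin.forall_rel_add_one_iff.2 ⟨hpath, hcyc⟩
  obtain ⟨m, hm⟩ := (Fin.exists_rel_add_one_iff
    (R := fun a b => Commute (raagGen E a) (raagGen E b))).2 hadj
  open Fin.NatCast in
  have hwalk := pairwise_commute_of_walk hpure hsq (fun k : ℕ => p (m + k))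
    (fun k => by simpa only [Nat.cast_succ, add_assoc] using hedge (m + k))
    (by simpa only [Nat.cast_zero, add_zero, Nat.cast_one] using hm)
  intro i j
  open Fin.NatCast in
  simpa only [Fin.cast_val_eq_self, add_sub_cancel] using hwalk (i - m).val (j - m).val

theorem cycle_adjacent_commute_complete {V : Type} [Fintype V] {E : V → V → Prop}
    (φ : MulAut (RAAG V E)) (hpure : IsPure φ) (hsq : IsSquareMap φ)
    (n : ℕ) (p : Fin (n + 1) → V)
    (hpath : ∀ i : Fin n, DEdge φ (p i.castSucc) (p i.succ))
    (hcyc : DEdge φ (p (Fin.last n)) (p 0))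
    (hadj : (∃ i : Fin n, Commute (raagGen E (p i.castSucc)) (raagGen E (p i.succ))) ∨
      Commute (raagGen E (p (Fin.last n))) (raagGen E (p 0))) :
    ∀ i j : Fin (n + 1), Commute (raagGen E (p i)) (raagGen E (p j)) :=
  cycle_adjacent_commute_complete_general φ hpure hsq n p hpath hcyc hadj
end

section
/- Let φ be a pure square automorphism of A(Γ) and let C be a directed cycle in the automorphism diagram D_φ. If any pair of vertices on C (adjacent or not) commutes in A(Γ), then all vertices of C span a complete subgraph of Γ. Consequently, every directed cycle in D_φ spans in Γ either a complete subgraph or an empty (edgeless) subgraph. -/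
open Filter Matrix

theorem cycle_any_commute_complete {V : Type} [Fintype V] {E : V → V → Prop}
    (φ : MulAut (RAAG V E)) (hpure : IsPure φ) (hsq : IsSquareMap φ)
    (n : ℕ) (p : Fin (n + 1) → V)
    (hpath : ∀ i : Fin n, DEdge φ (p i.castSucc) (p i.succ))
    (hcyc : DEdge φ (p (Fin.last n)) (p 0))
    (hcomm : ∃ i j : Fin (n + 1), p i ≠ p j ∧
      Commute (raagGen E (p i)) (raagGen E (p j))) :
    ∀ i j : Fin (n + 1), Commute (raagGen E (p i)) (raagGen E (p j)) := by
  have hmpos : 0 < n + 1 := Nat.succ_pos n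
  set q : ℕ → V := fun k => p ⟨k % (n + 1), Nat.mod_lt k hmpos⟩ with hq
  have hqp : ∀ i : Fin (n + 1), q i.val = p i := by
    intro i
    simp only [hq]
    congr 1
    exact Fin.ext (Nat.mod_eq_of_lt i.isLt)
  have hper : ∀ k, q (k + (n + 1)) = q k := by
    intro k; simp only [hq, Nat.add_mod_right]
  have hone : 1 % (n + 1) = 1 ∨ n = 0 := by
    rcases Nat.eq_zero_or_pos n with h | h
    · exact Or.inr h
    · exact Or.inl (Nat.mod_eq_of_lt (by omega))
  have hedge : ∀ k, DEdge φ (q k) (q (k + 1)) := by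
    intro k
    have hk : k % (n + 1) < n + 1 := Nat.mod_lt k hmpos
    rcases Nat.lt_or_ge (k % (n + 1)) n with h | h
    · have h1' : 1 % (n + 1) = 1 := by
        rcases hone with h1 | h0
        · exact h1
        · omega
      have h1 : (k + 1) % (n + 1) = k % (n + 1) + 1 := by
        rw [Nat.add_mod, h1']
        exact Nat.mod_eq_of_lt (by omega)
      have e1 : q k = p (Fin.castSucc ⟨k % (n + 1), h⟩) := rfl
      have e2 : q (k + 1) = p (Fin.succ ⟨k % (n + 1), h⟩) := by
        simp only [hq]; congr 1; exact Fin.ext h1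
      rw [e1, e2]; exact hpath _
    · have hn : k % (n + 1) = n := by omega
      have h1 : (k + 1) % (n + 1) = 0 := by
        rcases hone with h1 | h0
        · rw [Nat.add_mod, h1, hn, Nat.mod_self]
        · subst h0; simp [Nat.mod_one]
      have e1 : q k = p (Fin.last n) := by
        simp only [hq]; congr 1; exact Fin.ext hn
      have e2 : q (k + 1) = p 0 := by
        simp only [hq]; congr 1; exact Fin.ext (by simpa using h1)
      rw [e1, e2]; exact hcyc
  have hstep : ∀ a b : ℕ, q a ≠ q b →
      Commute (raagGen E (q a)) (raagGen E (q b)) →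
      Commute (raagGen E (q (a + 1))) (raagGen E (q (b + 1))) ∧
      Commute (raagGen E (q a)) (raagGen E (q (b + 1))) ∧
      Commute (raagGen E (q (a + 1))) (raagGen E (q b)) := by
    intro a b hne hc
    have h := hsq (q a) (q b) hne hc
    exact ⟨h _ (hedge a).2 _ (hedge b).2, h _ (hpure (q a)) _ (hedge b).2,
      h _ (hedge a).2 _ (hpure (q b))⟩
  -- From a distinct commuting pair, some consecutive pair commutes.
  have hconsec0 : ∀ r a d, d + r = n + 1 → q a ≠ q (a + d) →
      Commute (raagGen E (q a)) (raagGen E (q (a + d))) →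
      ∃ t, Commute (raagGen E (q t)) (raagGen E (q (t + 1))) := by
    intro r
    induction r with
    | zero =>
      intro a d hd hne _
      exfalso; apply hne
      have e : a + d = a + (n + 1) := by omega
      rw [e, hper]
    | succ r ih =>
      intro a d hd hne hc
      obtain ⟨h11, h01, _⟩ := hstep a (a + d) hne hc
      by_cases he : q a = q (a + d + 1)
      · rw [← he] at h11
        exact ⟨a, h11.symm⟩
      · exact ih a (d + 1) (by omega) he h01
  obtain ⟨i₀, j₀, hne0, hc0⟩ := hcomm
  have hne0' : q i₀.val ≠ q j₀.val := by rw [hqp, hqp]; exact hne0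
  have hc0' : Commute (raagGen E (q i₀.val)) (raagGen E (q j₀.val)) := by
    rw [hqp, hqp]; exact hc0
  have hd : ∃ d, d ≤ n + 1 ∧ q (i₀.val + d) = q j₀.val := by
    rcases Nat.lt_or_ge i₀.val j₀.val with h | h
    · refine ⟨j₀.val - i₀.val, by omega, ?_⟩
      rw [show i₀.val + (j₀.val - i₀.val) = j₀.val from by omega]
    · refine ⟨j₀.val + (n + 1) - i₀.val, by omega, ?_⟩
      have e : i₀.val + (j₀.val + (n + 1) - i₀.val) = j₀.val + (n + 1) := by omega
      rw [e, hper]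
  obtain ⟨d, hdle, hdq⟩ := hd
  obtain ⟨t, ht⟩ := hconsec0 (n + 1 - d) i₀.val d (by omega)
    (by rw [hdq]; exact hne0') (by rw [hdq]; exact hc0')
  -- All consecutive pairs from t onward commute.
  have hconsecT : ∀ k, Commute (raagGen E (q (t + k))) (raagGen E (q (t + k + 1))) := by
    intro k
    induction k with
    | zero => exact ht
    | succ k ih => exact (hstep (t + k) (t + k + 1) (Ne.symm (hedge (t + k)).1) ih).1
  have hperm : ∀ j x, q (x + j * (n + 1)) = q x := by
    intro j
    induction j with
    | zero => intro x; simp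
    | succ j ih =>
      intro x
      have e : x + (j + 1) * (n + 1) = (x + j * (n + 1)) + (n + 1) := by ring
      rw [e, hper, ih]
  have hconsecAll : ∀ s, Commute (raagGen E (q s)) (raagGen E (q (s + 1))) := by
    intro s
    have h := hconsecT (s + t * n)
    have e1 : t + (s + t * n) = s + t * (n + 1) := by ring
    have e2 : s + t * (n + 1) + 1 = (s + 1) + t * (n + 1) := by ring
    rw [e1, e2, hperm t s, hperm t (s + 1)] at h
    exact h
  have htotal : ∀ d a, Commute (raagGen E (q a)) (raagGen E (q (a + d))) := by
    intro d
    induction d with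
    | zero => intro a; exact Commute.refl _
    | succ d ih =>
      intro a
      by_cases he : q a = q (a + d)
      · have h := hconsecAll (a + d)
        rw [← he] at h
        exact h
      · exact (hstep a (a + d) he (ih a)).2.1
  intro i j
  rw [← hqp i, ← hqp j]
  rcases Nat.lt_or_ge i.val j.val with h | h
  · have h2 := htotal (j.val - i.val) i.val
    rwa [show i.val + (j.val - i.val) = j.val by omega] at h2
  · have h2 := htotal (j.val + (n + 1) - i.val) i.val
    rw [show i.val + (j.val + (n + 1) - i.val) = j.val + (n + 1) by omega, hper] at h2
    exact h2
end

section
/- Let φ be a pure square automorphism of A(Γ), and let C₁, C₂ be two directed cycles in the automorphism diagram D_φ sharing a common vertex s. If some pair of elements in C₁ ∪ C₂ commutes in A(Γ), then all vertices of C₁ ∪ C₂ span a complete subgraph of Γ. -/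
open Filter Matrix

/-- Propagation of commutation along a directed path in `D_φ` (restricted to a set `S`),
keeping the other coordinate `w` fixed. -/
lemma prop_main {V : Type} {E : V → V → Prop} {φ : MulAut (RAAG V E)}
    (hpure : IsPure φ) (hsq : IsSquareMap φ) (S : Set V)
    {a w x : V} (hwS : w ∈ S)
    (h : Relation.ReflTransGen (fun x y => DEdge φ x y ∧ x ∈ S ∧ y ∈ S) a x)
    (hcomm : Commute (raagGen E a) (raagGen E w)) (hne : a ≠ w) :
    Commute (raagGen E x) (raagGen E w) ∧
      (x = w → ∃ c, c ∈ S ∧ c ≠ w ∧ Commute (raagGen E c) (raagGen E w) ∧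
        w ∈ supp (φ (raagGen E c))) := by
  induction h with
  | refl => exact ⟨hcomm, fun h => absurd h hne⟩
  | @tail b c hab hbc ih =>
    obtain ⟨⟨hcne, hcsupp⟩, hbS, hcS⟩ := hbc
    by_cases hbw : b = w
    · subst hbw
      obtain ⟨c₀, hc₀S, hc₀ne, hc₀comm, hc₀supp⟩ := ih.2 rfl
      have hbc : Commute (raagGen E b) (raagGen E c) :=
        hsq c₀ b hc₀ne hc₀comm b hc₀supp c hcsupp
      exact ⟨hbc.symm, fun h => absurd h hcne⟩
    · have hcw : Commute (raagGen E c) (raagGen E w) :=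
        hsq b w hbw ih.1 c hcsupp w (hpure w)
      exact ⟨hcw, fun hcw' => ⟨b, hbS, hbw, ih.1, hcw' ▸ hcsupp⟩⟩

/-- Any vertex of a directed cycle reaches any other vertex of the cycle. -/
lemma cycle_reach {V : Type} (R : V → V → Prop) (m : ℕ) (p : Fin (m + 1) → V)
    (hpath : ∀ i : Fin m, R (p i.castSucc) (p i.succ))
    (hcyc : R (p (Fin.last m)) (p 0)) (i j : Fin (m + 1)) :
    Relation.ReflTransGen R (p i) (p j) := by
  have key : ∀ (d k : ℕ) (hk : k + d ≤ m),
      Relation.ReflTransGen R (p ⟨k, by omega⟩) (p ⟨k + d, by omega⟩) := by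
    intro d
    induction d with
    | zero => intro k hk; exact .refl
    | succ d ihd =>
      intro k hk
      refine (ihd k (by omega)).tail ?_
      have h2 := hpath ⟨k + d, by omega⟩
      have e1 : (⟨k + d, by omega⟩ : Fin m).castSucc = (⟨k + d, by omega⟩ : Fin (m + 1)) :=
        Fin.ext rfl
      have e2 : (⟨k + d, by omega⟩ : Fin m).succ = (⟨k + (d + 1), by omega⟩ : Fin (m + 1)) :=
        Fin.ext (by simp [Nat.add_assoc])
      rwa [e1, e2] at h2
  have hi : Relation.ReflTransGen R (p i) (p (Fin.last m)) := by
    have h := key (m - i.val) i.val (by omega)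
    have e1 : (⟨i.val, by omega⟩ : Fin (m + 1)) = i := Fin.ext rfl
    have e2 : (⟨i.val + (m - i.val), by omega⟩ : Fin (m + 1)) = Fin.last m :=
      Fin.ext (by simp [Fin.last]; omega)
    rwa [e1, e2] at h
  have hj : Relation.ReflTransGen R (p 0) (p j) := by
    have h := key j.val 0 (by omega)
    have e1 : (⟨0, by omega⟩ : Fin (m + 1)) = 0 := rfl
    have e2 : (⟨0 + j.val, by omega⟩ : Fin (m + 1)) = j := Fin.ext (by simp)
    rwa [e1, e2] at h
  exact (hi.tail hcyc).trans hj

theorem two_cycles_commute_complete {V : Type} [Fintype V] {E : V → V → Prop}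
    (φ : MulAut (RAAG V E)) (hpure : IsPure φ) (hsq : IsSquareMap φ)
    (m n : ℕ) (p : Fin (m + 1) → V) (q : Fin (n + 1) → V)
    (hpathp : ∀ i : Fin m, DEdge φ (p i.castSucc) (p i.succ))
    (hcycp : DEdge φ (p (Fin.last m)) (p 0))
    (hpathq : ∀ i : Fin n, DEdge φ (q i.castSucc) (q i.succ))
    (hcycq : DEdge φ (q (Fin.last n)) (q 0))
    (hshare : ∃ (i : Fin (m + 1)) (j : Fin (n + 1)), p i = q j)
    (hcomm : ∃ u v : V, u ∈ Set.range p ∪ Set.range q ∧ v ∈ Set.range p ∪ Set.range q ∧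
      u ≠ v ∧ Commute (raagGen E u) (raagGen E v)) :
    ∀ u ∈ Set.range p ∪ Set.range q, ∀ v ∈ Set.range p ∪ Set.range q,
      Commute (raagGen E u) (raagGen E v) := by
  set S : Set V := Set.range p ∪ Set.range q with hS
  set R : V → V → Prop := fun x y => DEdge φ x y ∧ x ∈ S ∧ y ∈ S with hR
  have hpmem : ∀ i, p i ∈ S := fun i => Or.inl ⟨i, rfl⟩
  have hqmem : ∀ i, q i ∈ S := fun i => Or.inr ⟨i, rfl⟩
  have reach_pp : ∀ i j, Relation.ReflTransGen R (p i) (p j) :=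
    cycle_reach R m p (fun i => ⟨hpathp i, hpmem _, hpmem _⟩) ⟨hcycp, hpmem _, hpmem _⟩
  have reach_qq : ∀ i j, Relation.ReflTransGen R (q i) (q j) :=
    cycle_reach R n q (fun i => ⟨hpathq i, hqmem _, hqmem _⟩) ⟨hcycq, hqmem _, hqmem _⟩
  obtain ⟨i₀, j₀, hshare⟩ := hshare
  have reach_any : ∀ x ∈ S, ∀ y ∈ S, Relation.ReflTransGen R x y := by
    rintro x (⟨i, rfl⟩ | ⟨i, rfl⟩) y (⟨j, rfl⟩ | ⟨j, rfl⟩)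
    · exact reach_pp i j
    · exact (reach_pp i i₀).trans (hshare ▸ reach_qq j₀ j)
    · exact (reach_qq i j₀).trans (hshare ▸ reach_pp i₀ j)
    · exact reach_qq i j
  intro u hu v hv
  rcases eq_or_ne u v with rfl | huv
  · exact Commute.refl _
  obtain ⟨a, b, haS, hbS, hab, habc⟩ := hcomm
  have q1 := prop_main hpure hsq S hbS (reach_any a haS u hu) habc hab
  obtain ⟨c, hcS, hcu, hccomm⟩ :
      ∃ c, c ∈ S ∧ c ≠ u ∧ Commute (raagGen E c) (raagGen E u) := by
    by_cases hub : u = b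
    · obtain ⟨c, hcS, hcne, hccomm, -⟩ := q1.2 hub
      exact ⟨c, hcS, hub ▸ hcne, hub ▸ hccomm⟩
    · exact ⟨b, hbS, fun h => hub h.symm, q1.1.symm⟩
  have q2 := prop_main hpure hsq S hu (reach_any c hcS v hv) hccomm hcu
  exact q2.1.symm
end

section
/- Let φ be an automorphism of A(Γ), and suppose the automorphism diagram D_φ has connected components (D_φ)₁, ..., (D_φ)_k (components of the underlying undirected graph). Then there exists some i such that λ_φ = λ_φ|_{(D_φ)_i}, i.e., the dilatation of φ is realized on the special subgroup generated by the vertices of a single component. -/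
open Filter Matrix

section Generic
variable {G : Type*} [Group G] {S : Set G}

lemma wset_nonempty (hgen : Subgroup.closure S = ⊤) (g : G) :
    {n | ∃ l : List G, (∀ x ∈ l, x ∈ S ∨ x⁻¹ ∈ S) ∧ l.prod = g ∧ l.length = n}.Nonempty := by
  have hg : g ∈ Subgroup.closure S := hgen ▸ Subgroup.mem_top g
  have hg' : g ∈ (Subgroup.closure S).toSubmonoid := hg
  rw [Subgroup.closure_toSubmonoid] at hg'
  obtain ⟨l, hl, hprod⟩ := Submonoid.exists_list_of_mem_closure hg'
  refine ⟨l.length, l, fun x hx => ?_, hprod, rfl⟩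
  rcases hl x hx with h | h
  · exact Or.inl h
  · exact Or.inr (Set.mem_inv.mp h)

lemma wlen_spec (hgen : Subgroup.closure S = ⊤) (g : G) :
    ∃ l : List G, (∀ x ∈ l, x ∈ S ∨ x⁻¹ ∈ S) ∧ l.prod = g ∧ l.length = wlen S g :=
  Nat.sInf_mem (wset_nonempty hgen g)

lemma wlen_le {g : G} {l : List G} (hl : ∀ x ∈ l, x ∈ S ∨ x⁻¹ ∈ S) (hprod : l.prod = g) :
    wlen S g ≤ l.length :=
  Nat.sInf_le ⟨l, hl, hprod, rfl⟩

lemma wlen_one : wlen S (1 : G) = 0 :=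
  Nat.le_zero.mp (wlen_le (l := []) (by simp) (by simp))

lemma wlen_mul_le (hgen : Subgroup.closure S = ⊤) (a b : G) :
    wlen S (a * b) ≤ wlen S a + wlen S b := by
  obtain ⟨l₁, h₁, hp₁, hn₁⟩ := wlen_spec hgen a
  obtain ⟨l₂, h₂, hp₂, hn₂⟩ := wlen_spec hgen b
  have := wlen_le (g := a * b) (l := l₁ ++ l₂)
    (fun x hx => by rcases List.mem_append.mp hx with h | h; exacts [h₁ x h, h₂ x h])
    (by rw [List.prod_append, hp₁, hp₂])
  simpa [hn₁, hn₂] using this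

lemma wlen_inv_le (hgen : Subgroup.closure S = ⊤) (g : G) :
    wlen S g⁻¹ ≤ wlen S g := by
  obtain ⟨l, h, hp, hn⟩ := wlen_spec hgen g
  have := wlen_le (g := g⁻¹) (l := (l.map (·⁻¹)).reverse)
    (fun x hx => by
      simp only [List.mem_reverse, List.mem_map] at hx
      obtain ⟨y, hy, rfl⟩ := hx
      rcases h y hy with h' | h'
      · exact Or.inr (by simpa using h')
      · exact Or.inl h')
    (by rw [← hp, ← List.prod_inv_reverse])
  simpa [hn] using this

lemma wlen_prod_le (hgen : Subgroup.closure S = ⊤) (l : List G) :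
    wlen S l.prod ≤ (l.map (wlen S)).sum := by
  induction l with
  | nil => simp [wlen_one]
  | cons a t ih =>
      simp only [List.prod_cons, List.map_cons, List.sum_cons]
      exact le_trans (wlen_mul_le hgen a t.prod) (Nat.add_le_add_left ih _)

end Generic

section Main
variable {G : Type*} [Group G] {V : Type} [Fintype V] [Nonempty V] (gen : V → G)

local notation "S" => Set.range gen

lemma mem_bound (hgen : Subgroup.closure (Set.range gen) = ⊤)
    (ψ : MulAut G) {x : G} (hx : x ∈ S ∨ x⁻¹ ∈ S) :
    wlen S (ψ x) ≤ Finset.univ.sup (fun s => wlen S (ψ (gen s))) := by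
  rcases hx with ⟨t, rfl⟩ | ⟨t, ht⟩
  · exact Finset.le_sup (f := fun s => wlen S (ψ (gen s))) (Finset.mem_univ t)
  · have hx : x = (gen t)⁻¹ := by rw [ht, inv_inv]
    subst hx
    rw [map_inv]
    exact le_trans (wlen_inv_le hgen _)
      (Finset.le_sup (f := fun s => wlen S (ψ (gen s))) (Finset.mem_univ t))

lemma wlen_image_le (hgen : Subgroup.closure (Set.range gen) = ⊤)
    (ψ : MulAut G) (h : G) :
    wlen S (ψ h) ≤ wlen S h * Finset.univ.sup (fun s => wlen S (ψ (gen s))) := by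
  obtain ⟨l, hl, hp, hn⟩ := wlen_spec hgen h
  have hψ : ψ h = (l.map ψ).prod := by rw [← hp, map_list_prod]
  calc wlen S (ψ h) ≤ ((l.map ψ).map (wlen S)).sum := hψ ▸ wlen_prod_le hgen _
    _ ≤ ((l.map ψ).map (wlen S)).length • Finset.univ.sup (fun s => wlen S (ψ (gen s))) := by
        apply List.sum_le_card_nsmul
        intro x hx
        simp only [List.mem_map] at hx
        obtain ⟨-, ⟨y, hy, rfl⟩, rfl⟩ := hx
        exact mem_bound gen hgen ψ (hl y hy)
    _ = _ := by simp [hn, smul_eq_mul]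

lemma wlen_pow_le (hgen : Subgroup.closure (Set.range gen) = ⊤)
    (φ : MulAut G) (g : G) (k : ℕ) :
    wlen S ((φ ^ k) g) ≤
      wlen S g * (max 1 (Finset.univ.sup (fun s => wlen S (φ (gen s))))) ^ k := by
  set M := max 1 (Finset.univ.sup (fun s => wlen S (φ (gen s)))) with hM
  induction k generalizing g with
  | zero => simp
  | succ k ih =>
      have hstep : (φ ^ (k + 1)) g = (φ ^ k) (φ g) := by
        rw [pow_succ]; rfl
      rw [hstep]
      calc wlen S ((φ ^ k) (φ g)) ≤ wlen S (φ g) * M ^ k := ih _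
        _ ≤ (wlen S g * M) * M ^ k := by
            apply Nat.mul_le_mul_right
            exact le_trans (wlen_image_le gen hgen φ g)
              (Nat.mul_le_mul_left _ (le_max_right _ _))
        _ = wlen S g * M ^ (k + 1) := by ring

end Main

section Analytic
variable {G : Type*} [Group G] {V : Type} [Fintype V] [Nonempty V] (gen : V → G)

local notation "S" => Set.range gen

lemma log_nat_le {a b : ℕ} (h : a ≤ b) : Real.log a ≤ Real.log b := by
  rcases Nat.eq_zero_or_pos a with rfl | ha
  · simpa using Real.log_natCast_nonneg b
  · exact Real.log_le_log (by exact_mod_cast ha) (by exact_mod_cast h)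

lemma log_nat_mul_le (a b : ℕ) : Real.log (↑(a * b)) ≤ Real.log a + Real.log b := by
  rcases Nat.eq_zero_or_pos a with rfl | ha
  · simpa using add_nonneg (Real.log_natCast_nonneg 0) (Real.log_natCast_nonneg b)
  rcases Nat.eq_zero_or_pos b with rfl | hb
  · simpa using add_nonneg (Real.log_natCast_nonneg a) (Real.log_natCast_nonneg 0)
  · push_cast
    rw [Real.log_mul (by positivity) (by positivity)]

noncomputable def fdil (φ : MulAut G) (w : G) (k : ℕ) : ℝ :=
  Real.log (wlen S ((φ ^ k) w)) / k

lemma fdil_nonneg (φ : MulAut G) (w : G) (k : ℕ) : 0 ≤ fdil gen φ w k :=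
  div_nonneg (Real.log_natCast_nonneg _) (Nat.cast_nonneg _)

lemma fdil_gen_le (hgen : Subgroup.closure (Set.range gen) = ⊤) (φ : MulAut G) (s : V) (k : ℕ) :
    fdil gen φ (gen s) k ≤
      Real.log (max 1 (Finset.univ.sup fun t => wlen S (φ (gen t))) : ℕ) := by
  set M := max 1 (Finset.univ.sup fun t => wlen S (φ (gen t))) with hM
  have hlogM : (0:ℝ) ≤ Real.log M := Real.log_natCast_nonneg M
  rcases Nat.eq_zero_or_pos k with rfl | hk
  · simpa [fdil] using hlogM
  · have h1 : wlen S ((φ ^ k) (gen s)) ≤ M ^ k := by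
      have hg1 : wlen S (gen s) ≤ 1 := wlen_le (l := [gen s]) (by simp) (by simp)
      calc wlen S ((φ ^ k) (gen s)) ≤ wlen S (gen s) * M ^ k := wlen_pow_le gen hgen φ _ k
        _ ≤ 1 * M ^ k := Nat.mul_le_mul_right _ hg1
        _ = M ^ k := one_mul _
    have h2 : Real.log (wlen S ((φ ^ k) (gen s))) ≤ k * Real.log M := by
      calc Real.log (wlen S ((φ ^ k) (gen s))) ≤ Real.log ((M ^ k : ℕ)) := log_nat_le h1
        _ = k * Real.log M := by push_cast; rw [Real.log_pow]
    rw [fdil, div_le_iff₀ (by exact_mod_cast hk)]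
    calc Real.log (wlen S ((φ ^ k) (gen s))) ≤ k * Real.log M := h2
      _ = Real.log M * k := mul_comm _ _

open Filter in
lemma dil_le_sup (hgen : Subgroup.closure (Set.range gen) = ⊤) (φ : MulAut G) (w : G) :
    Filter.limsup (fdil gen φ w) Filter.atTop ≤
      Finset.univ.sup' Finset.univ_nonempty
        (fun s => Filter.limsup (fdil gen φ (gen s)) Filter.atTop) := by
  set D := Finset.univ.sup' Finset.univ_nonempty
    (fun s => Filter.limsup (fdil gen φ (gen s)) Filter.atTop) with hD
  have hbdd : ∀ s : V, IsBoundedUnder (· ≤ ·) atTop (fdil gen φ (gen s)) := fun s =>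
    isBoundedUnder_of ⟨_, fun k => fdil_gen_le gen hgen φ s k⟩
  refine le_of_forall_pos_le_add fun ε hε => ?_
  obtain ⟨l, hl, hp, hn⟩ := wlen_spec hgen w
  have hcob : IsCoboundedUnder (· ≤ ·) atTop (fdil gen φ w) :=
    IsBoundedUnder.isCoboundedUnder_le (isBoundedUnder_of ⟨0, fun k => fdil_nonneg gen φ w k⟩)
  refine limsup_le_of_le hcob ?_
  have ev1 : ∀ᶠ k : ℕ in atTop, ∀ s : V, fdil gen φ (gen s) k < D + ε / 2 := by
    rw [eventually_all]
    intro s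
    refine eventually_lt_of_limsup_lt ?_ (hbdd s)
    have : Filter.limsup (fdil gen φ (gen s)) atTop ≤ D :=
      Finset.le_sup' (f := fun s => Filter.limsup (fdil gen φ (gen s)) Filter.atTop)
        (Finset.mem_univ s)
    linarith
  have ev2 : ∀ᶠ k : ℕ in atTop, Real.log l.length / k ≤ ε / 2 :=
    (tendsto_const_div_atTop_nhds_zero_nat (Real.log l.length)).eventually_le_const
      (by linarith)
  filter_upwards [ev1, ev2, eventually_ge_atTop 1] with k h1 h2 h3
  -- pointwise bound
  set N := Finset.univ.sup (fun s => wlen S ((φ ^ k) (gen s))) with hN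
  have hwk : wlen S ((φ ^ k) w) ≤ l.length * N := by
    have hψ : (φ ^ k) w = (l.map (φ ^ k)).prod := by rw [← hp, map_list_prod]
    calc wlen S ((φ ^ k) w) ≤ ((l.map (φ ^ k)).map (wlen S)).sum :=
          hψ ▸ wlen_prod_le hgen _
      _ ≤ ((l.map (φ ^ k)).map (wlen S)).length • N := by
          apply List.sum_le_card_nsmul
          intro x hx
          simp only [List.mem_map] at hx
          obtain ⟨-, ⟨y, hy, rfl⟩, rfl⟩ := hx
          exact mem_bound gen hgen (φ ^ k) (hl y hy)
      _ = l.length * N := by simp [smul_eq_mul]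
  obtain ⟨s₀, -, hs₀⟩ := Finset.exists_mem_eq_sup Finset.univ Finset.univ_nonempty
    (fun s => wlen S ((φ ^ k) (gen s)))
  have hkpos : (0:ℝ) < k := by exact_mod_cast h3
  have hlogsplit : Real.log (wlen S ((φ ^ k) w)) ≤ Real.log l.length + Real.log N :=
    le_trans (log_nat_le hwk) (log_nat_mul_le _ _)
  have hNle : Real.log N / k < D + ε / 2 := by
    have : Real.log N / k = fdil gen φ (gen s₀) k := by rw [hN, hs₀]; rfl
    rw [this]; exact h1 s₀
  have hfinal : fdil gen φ w k ≤ Real.log l.length / k + Real.log N / k := by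
    rw [fdil, ← add_div]
    exact (div_le_div_iff_of_pos_right hkpos).mpr hlogsplit
  linarith

end Analytic

theorem dilatation_on_component {V : Type} [Fintype V] [Nonempty V]
    {E : V → V → Prop} (φ : MulAut (RAAG V E)) :
    ∃ s : V,
      (⨆ w : RAAG V E, dilAt (Set.range (raagGen E)) φ w) =
        ⨆ w : (Subgroup.closure (raagGen E ''
          {t | Relation.ReflTransGen (fun a b => DEdge φ a b ∨ DEdge φ b a) s t})),
          dilAt (Set.range (raagGen E)) φ (w : RAAG V E) := by
  classical
  have hgen : Subgroup.closure (Set.range (raagGen E)) = ⊤ := by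
    have h : Set.range (raagGen E) =
        Set.range (PresentedGroup.of : V → PresentedGroup (raagRels V E)) := rfl
    rw [h, PresentedGroup.closure_range_of]
  have hdil : ∀ w : RAAG V E, dilAt (Set.range (raagGen E)) φ w =
      Filter.limsup (fdil (raagGen E) φ w) Filter.atTop := fun w => rfl
  obtain ⟨s, -, hs⟩ := Finset.exists_mem_eq_sup' (Finset.univ_nonempty (α := V))
    (fun s : V => dilAt (Set.range (raagGen E)) φ (raagGen E s))
  have key : ∀ w : RAAG V E, dilAt (Set.range (raagGen E)) φ w ≤
      dilAt (Set.range (raagGen E)) φ (raagGen E s) := by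
    intro w
    rw [← hs, hdil w]
    exact dil_le_sup (raagGen E) hgen φ w
  refine ⟨s, ?_⟩
  set H := Subgroup.closure (raagGen E ''
    {t | Relation.ReflTransGen (fun a b => DEdge φ a b ∨ DEdge φ b a) s t}) with hH
  have hmem : raagGen E s ∈ H :=
    Subgroup.subset_closure ⟨s, Relation.ReflTransGen.refl, rfl⟩
  haveI : Nonempty H := ⟨⟨1, H.one_mem⟩⟩
  have bddL : BddAbove (Set.range fun w : RAAG V E => dilAt (Set.range (raagGen E)) φ w) :=
    ⟨_, by rintro x ⟨w, rfl⟩; exact key w⟩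
  have bddR : BddAbove (Set.range fun w : H => dilAt (Set.range (raagGen E)) φ (w : RAAG V E)) :=
    ⟨_, by rintro x ⟨w, rfl⟩; exact key (w : RAAG V E)⟩
  apply le_antisymm
  · refine ciSup_le fun w => ?_
    exact le_trans (key w) (le_ciSup bddR ⟨raagGen E s, hmem⟩)
  · refine ciSup_le fun w => ?_
    exact le_trans (key (w : RAAG V E)) (le_ciSup bddL (raagGen E s))
end

section
/- Let φ be a pure square automorphism of A(Γ). Suppose A and B are commuting generators, v is reachable from A by a directed path in D_φ, and v' is reachable from B by a directed path in D_φ. Then v commutes with v' in A(Γ). -/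
open Filter Matrix

/-- Invariant: all generators in `supp (φ s)` commute with all generators in `supp (φ t)`. -/
def SuppComm {V : Type} {E : V → V → Prop} (φ : MulAut (RAAG V E)) (s t : V) : Prop :=
  ∀ u ∈ supp (φ (raagGen E s)), ∀ w ∈ supp (φ (raagGen E t)),
    Commute (raagGen E u) (raagGen E w)

lemma suppComm_step {V : Type} {E : V → V → Prop} {φ : MulAut (RAAG V E)}
    (hpure : IsPure φ) (hsq : IsSquareMap φ) {s t s' : V}
    (hI : SuppComm φ s t) (he : DEdge φ s s') : SuppComm φ s' t := by
  obtain ⟨hne, hmem⟩ := he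
  by_cases h : s' = t
  · subst h
    -- supp (φ s') pairwise commutes
    intro u hu w hw
    have hut : ∀ x ∈ supp (φ (raagGen E s')), Commute (raagGen E s') (raagGen E x) :=
      fun x hx => hI s' hmem x hx
    by_cases hu' : u = s'
    · subst hu'; exact hut w hw
    · exact hsq u s' hu' (hut u hu).symm u (hpure u) w hw
  · have hcomm' : Commute (raagGen E s') (raagGen E t) := hI s' hmem t (hpure t)
    exact hsq s' t h hcomm'

theorem downsets_of_commuting_commute {V : Type} [Fintype V] {E : V → V → Prop}
    (φ : MulAut (RAAG V E)) (hpure : IsPure φ) (hsq : IsSquareMap φ)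
    (A B v v' : V) (hAB : A ≠ B) (hcomm : Commute (raagGen E A) (raagGen E B))
    (hv : Relation.ReflTransGen (DEdge φ) A v)
    (hv' : Relation.ReflTransGen (DEdge φ) B v') :
    Commute (raagGen E v) (raagGen E v') := by
  have hsymm : ∀ s t, SuppComm φ s t → SuppComm φ t s :=
    fun s t h u hu w hw => (h w hw u hu).symm
  have hI : SuppComm φ v v' := by
    have hA : SuppComm φ v B := by
      induction hv with
      | refl => exact hsq A B hAB hcomm
      | tail _ e ih => exact suppComm_step hpure hsq ih e
    induction hv' with
    | refl => exact hA
    | tail _ e ih => exact hsymm _ _ (suppComm_step hpure hsq (hsymm _ _ ih) e)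
  exact hI v (hpure v) v' (hpure v')
end
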